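/- arXiv:2303.02114 — 3 statements merged into one kernel-verified Lean document; each statement's English description precedes it below -/
import Mathlib

section
/- Let λ > 0, D > 0, let X ∈ ℝ^{D×p}, y ∈ ℝ^D, let N be a norm on ℝ^p with dual norm N⋆, set U := y − Xβ for a fixed β ∈ ℝ^p, and suppose λ ≥ (2/D)·N⋆(Xᵀ U). If β̂ minimizes α ↦ (1/D)‖y − Xα‖₂² + λN(α) over ℝ^p, then for every α ∈ ℝ^p: (1/D)‖X(β − β̂)‖₂² ≤ (1/D)‖X(β − α)‖₂² + 2λN(α). -/
/-!
Expanding both squared residuals around the true parameter `β`, the minimality of `β̂` compared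
with `a` gives the basic inequality
`(1/D)‖X(β - β̂)‖² ≤ (1/D)‖X(β - a)‖² + (2/D)⟨XᵀU, β̂ - a⟩ + λ(N a - N β̂)`.
Hölder's inequality bounds the cross term by `(2/D) N⋆(XᵀU) N(β̂ - a) ≤ λ (N β̂ + N a)`, and
the `N β̂` terms cancel.
-/

open Matrix

theorem ContinuousLinearMap.apply_le_sSup_mul_norm {E : Type*} [SeminormedAddCommGroup E]
    [NormedSpace ℝ E] (f : E →L[ℝ] ℝ) (w : E) :
    f w ≤ sSup {r | ∃ u : E, ‖u‖ ≤ 1 ∧ r = f u} * ‖w‖ := by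
  have hbdd : BddAbove {r | ∃ u : E, ‖u‖ ≤ 1 ∧ r = f u} := by
    refine ⟨‖f‖, ?_⟩
    rintro _ ⟨u, hu, rfl⟩
    calc f u ≤ ‖f u‖ := le_abs_self _
      _ ≤ ‖f‖ * ‖u‖ := f.le_opNorm u
      _ ≤ ‖f‖ := mul_le_of_le_one_right (norm_nonneg f) hu
  rcases (norm_nonneg w).eq_or_lt with hw | hw
  · calc f w ≤ ‖f‖ * ‖w‖ := (le_abs_self _).trans (f.le_opNorm w)
      _ = _ := by rw [← hw, mul_zero, mul_zero]
  · have hmem : f (‖w‖⁻¹ • w) ∈ {r | ∃ u : E, ‖u‖ ≤ 1 ∧ r = f u} :=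
      ⟨_, by rw [norm_smul, norm_inv, norm_norm, inv_mul_cancel₀ hw.ne'], rfl⟩
    calc f w = f (‖w‖⁻¹ • w) * ‖w‖ := by
          rw [map_smul, smul_eq_mul, mul_comm, ← mul_assoc, mul_inv_cancel₀ hw.ne', one_mul]
      _ ≤ _ := mul_le_mul_of_nonneg_right (le_csSup hbdd hmem) hw.le

theorem LinearMap.apply_le_sSup_mul {V : Type*} [AddCommGroup V] [Module ℝ V]
    [FiniteDimensional ℝ V] (N : V → ℝ)
    (hN0 : ∀ w, 0 ≤ N w) (hNeq : ∀ w, N w = 0 ↔ w = 0)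
    (hNsmul : ∀ (c : ℝ) (w), N (c • w) = |c| * N w)
    (hNadd : ∀ w w', N (w + w') ≤ N w + N w') (f : V →ₗ[ℝ] ℝ) (w : V) :
    f w ≤ sSup {r | ∃ u : V, N u ≤ 1 ∧ r = f u} * N w := by
  let : Norm V := ⟨N⟩
  have core : NormedSpace.Core ℝ V := ⟨⟨hN0, hNsmul, hNadd⟩, hNeq⟩
  let := NormedAddCommGroup.ofCore core
  let := NormedSpace.ofCore core
  exact (LinearMap.toContinuousLinearMap f).apply_le_sSup_mul_norm w

noncomputable def dualNorm {n : Type*} [Fintype n] (N : (n → ℝ) → ℝ) (v : n → ℝ) : ℝ :=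
  sSup {r | ∃ w : n → ℝ, N w ≤ 1 ∧ r = ∑ j, v j * w j}

theorem dotProduct_le_dualNorm_mul {n : Type*} [Fintype n] (N : (n → ℝ) → ℝ)
    (hN0 : ∀ w, 0 ≤ N w) (hNeq : ∀ w, N w = 0 ↔ w = 0)
    (hNsmul : ∀ (c : ℝ) (w), N (c • w) = |c| * N w)
    (hNadd : ∀ w w', N (w + w') ≤ N w + N w') (v w : n → ℝ) :
    v ⬝ᵥ w ≤ dualNorm N v * N w :=
  LinearMap.apply_le_sSup_mul N hN0 hNeq hNsmul hNadd (dotProductBilin ℝ ℝ v) w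

theorem sum_sq_sub_mulVec_eq {m n : Type*} [Fintype m] [Fintype n] (X : Matrix m n ℝ)
    (y : m → ℝ) (β b : n → ℝ) :
    ∑ t, (y t - (X *ᵥ b) t) ^ 2 = ∑ t, (y t - (X *ᵥ β) t) ^ 2 +
      2 * ((Xᵀ *ᵥ (y - X *ᵥ β)) ⬝ᵥ (β - b)) + ∑ t, ((X *ᵥ (β - b)) t) ^ 2 := by
  rw [mulVec_transpose, ← dotProduct_mulVec, mulVec_sub]
  simp only [dotProduct, Pi.sub_apply, Finset.mul_sum, ← Finset.sum_add_distrib]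
  exact Finset.sum_congr rfl fun t _ => by ring

theorem oracle_inequality_general {D p : ℕ} (lam : ℝ) (hlam0 : 0 < lam)
    (X : Matrix (Fin D) (Fin p) ℝ) (y : Fin D → ℝ)
    (N : (Fin p → ℝ) → ℝ)
    (hN0 : ∀ w, 0 ≤ N w) (hNeq : ∀ w, N w = 0 ↔ w = 0)
    (hNsmul : ∀ (c : ℝ) (w), N (c • w) = |c| * N w)
    (hNadd : ∀ w w', N (w + w') ≤ N w + N w')
    (β : Fin p → ℝ)
    (hlam : lam ≥ (2 / (D : ℝ)) * sSup {r : ℝ | ∃ w : Fin p → ℝ, N w ≤ 1 ∧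
      r = ∑ j, (X.transpose.mulVec (y - X.mulVec β)) j * w j})
    (βhat : Fin p → ℝ)
    (hmin : ∀ a : Fin p → ℝ,
      (1 / (D : ℝ)) * (∑ t, (y t - X.mulVec βhat t) ^ 2) + lam * N βhat ≤
        (1 / (D : ℝ)) * (∑ t, (y t - X.mulVec a t) ^ 2) + lam * N a) :
    ∀ a : Fin p → ℝ,
      (1 / (D : ℝ)) * (∑ t, (X.mulVec (β - βhat) t) ^ 2) ≤
        (1 / (D : ℝ)) * (∑ t, (X.mulVec (β - a) t) ^ 2) + 2 * lam * N a := by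
  intro a
  have hbasic := hmin a
  rw [sum_sq_sub_mulVec_eq X y β βhat, sum_sq_sub_mulVec_eq X y β a] at hbasic
  set v := Xᵀ *ᵥ (y - X *ᵥ β)
  have hcross : v ⬝ᵥ (βhat - a) = v ⬝ᵥ (β - a) - v ⬝ᵥ (β - βhat) := by
    rw [← dotProduct_sub, sub_sub_sub_cancel_left]
  have htri : N (βhat - a) ≤ N βhat + N a := by
    have hneg : N (-a) = N a := by simpa using hNsmul (-1) a
    simpa only [← sub_eq_add_neg, hneg] using hNadd βhat (-a)
  have hholder : 2 / (D : ℝ) * v ⬝ᵥ (βhat - a) ≤ lam * (N βhat + N a) :=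
    calc 2 / (D : ℝ) * v ⬝ᵥ (βhat - a)
        ≤ 2 / (D : ℝ) * (dualNorm N v * N (βhat - a)) := by
          gcongr; exact dotProduct_le_dualNorm_mul N hN0 hNeq hNsmul hNadd v _
      _ = 2 / (D : ℝ) * dualNorm N v * N (βhat - a) := by ring
      _ ≤ lam * N (βhat - a) := by gcongr; exacts [hN0 _, hlam]
      _ ≤ lam * (N βhat + N a) := by gcongr
  rw [hcross] at hholder
  linear_combination hbasic + hholder

/-- Basic oracle inequality for the `N`-penalized least-squares estimator with tuning
parameter `λ ≥ (2/D)·N⋆(XᵀU)`. -/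
theorem oracle_inequality {D p : ℕ} (hD : 0 < D) (lam : ℝ) (hlam0 : 0 < lam)
    (X : Matrix (Fin D) (Fin p) ℝ) (y : Fin D → ℝ)
    (N : (Fin p → ℝ) → ℝ)
    (hN0 : ∀ w, 0 ≤ N w) (hNeq : ∀ w, N w = 0 ↔ w = 0)
    (hNsmul : ∀ (c : ℝ) (w), N (c • w) = |c| * N w)
    (hNadd : ∀ w w', N (w + w') ≤ N w + N w')
    (β : Fin p → ℝ)
    (hlam : lam ≥ (2 / (D : ℝ)) * sSup {r : ℝ | ∃ w : Fin p → ℝ, N w ≤ 1 ∧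
      r = ∑ j, (X.transpose.mulVec (y - X.mulVec β)) j * w j})
    (βhat : Fin p → ℝ)
    (hmin : ∀ a : Fin p → ℝ,
      (1 / (D : ℝ)) * (∑ t, (y t - X.mulVec βhat t) ^ 2) + lam * N βhat ≤
        (1 / (D : ℝ)) * (∑ t, (y t - X.mulVec a t) ^ 2) + lam * N a) :
    ∀ a : Fin p → ℝ,
      (1 / (D : ℝ)) * (∑ t, (X.mulVec (β - βhat) t) ^ 2) ≤
        (1 / (D : ℝ)) * (∑ t, (X.mulVec (β - a) t) ^ 2) + 2 * lam * N a :=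
  oracle_inequality_general lam hlam0 X y N hN0 hNeq hNsmul hNadd β hlam βhat hmin
end

section
/- Let β̂ minimize the penalized objective with nested group norm N and λ ≥ (4/D)·N⋆(XᵀU), and suppose β vanishes on all groups G_l with l > L₀. Writing v := β − β̂, the 'cone condition' holds: Σ_{l=L₀+1}^{L} sqrt(|G_l|)·‖v_{G_l}‖_F ≤ 3·Σ_{l=1}^{L₀} sqrt(|G_l|)·‖v_{G_l}‖_F. -/
/-- Frobenius norm of the part of `v : ℝ^{M×L}` on the group `G_l` (columns of index ≥ l). -/
noncomputable def tailNormP (M L : ℕ) (v : Fin M × Fin L → ℝ) (l : Fin L) : ℝ :=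
  Real.sqrt (∑ q ∈ Finset.univ.filter (fun q : Fin M × Fin L => l ≤ q.2), (v q) ^ 2)

/-- The nested hierarchical group norm on `ℝ^{M×L}`. -/
noncomputable def NG (M L : ℕ) (β : Fin M × Fin L → ℝ) : ℝ :=
  ∑ l : Fin L, Real.sqrt ((M * (L - l.val) : ℕ)) * tailNormP M L β l

/-!
Comparing the objective at `βhat` and at `β` and expanding the square gives the basic inequality
`λ N(βhat) + (2/D) ⟪XᵀU, v⟫ ≤ λ N(β)`. By the choice of `λ` the cross term is at least
`-(λ/2) N(v)` (dual-norm bound), hence `N(βhat) ≤ N(β) + N(v)/2`. Split `N` into head groups and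
tail groups: `β` has no tail, on the tail groups `βhat` and `v` agree up to sign, and on the head
groups `N(β) ≤ N(βhat) + N(v)`. Rearranging gives `tail(v) ≤ 3 head(v)`.

Groups are indexed by `l : Fin L` from `0`, so the paper's `G_l` with `l > L₀` are those with
`L₀ ≤ l.val`.
-/

open Finset Matrix

section PenalizedLeastSquares

variable {κ ι : Type*} [Fintype κ] [Fintype ι]

theorem sum_mul_le_sSup_mul (p : (ι → ℝ) → ℝ) (hp_nonneg : ∀ u, 0 ≤ p u)
    (hp_smul : ∀ (c : ℝ) u, p (c • u) = |c| * p u) (hp_abs : ∀ u i, |u i| ≤ p u)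
    (Z u : ι → ℝ) :
    ∑ i, Z i * u i ≤ sSup {r : ℝ | ∃ w, p w ≤ 1 ∧ r = ∑ i, Z i * w i} * p u := by
  set S := {r : ℝ | ∃ w, p w ≤ 1 ∧ r = ∑ i, Z i * w i}
  have hS : BddAbove S := by
    refine ⟨∑ i, |Z i|, ?_⟩
    rintro r ⟨w, hw, rfl⟩
    refine sum_le_sum fun i _ => ?_
    calc Z i * w i ≤ |Z i| * |w i| := by rw [← abs_mul]; exact le_abs_self _
      _ ≤ |Z i| := mul_le_of_le_one_right (abs_nonneg _) ((hp_abs w i).trans hw)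
  rcases (hp_nonneg u).eq_or_lt with hu | hu
  · have hu0 : u = 0 := funext fun i => abs_nonpos_iff.mp (hu ▸ hp_abs u i)
    rw [← hu, mul_zero]
    simp [hu0]
  · have hmem : (p u)⁻¹ * ∑ i, Z i * u i ∈ S := by
      refine ⟨(p u)⁻¹ • u, ?_, ?_⟩
      · rw [hp_smul, abs_of_pos (inv_pos.mpr hu), inv_mul_cancel₀ hu.ne']
      · simp only [mul_sum, Pi.smul_apply, smul_eq_mul, mul_left_comm]
    rw [mul_comm (sSup S), ← inv_mul_le_iff₀ hu]
    exact le_csSup hS hmem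

theorem penalized_least_squares_basic_inequality {c : ℝ} (hc : 0 ≤ c)
    (pen : (ι → ℝ) → ℝ) (X : Matrix κ ι ℝ) (y : κ → ℝ) (β βhat : ι → ℝ)
    (hmin : c * ∑ t, (y t - (X *ᵥ βhat) t) ^ 2 + pen βhat ≤
      c * ∑ t, (y t - (X *ᵥ β) t) ^ 2 + pen β) :
    pen βhat + 2 * c * ∑ i, (Xᵀ *ᵥ (y - X *ᵥ β)) i * (β - βhat) i ≤ pen β := by
  set U := y - X *ᵥ β
  set v := β - βhat
  have hcross : ∑ t, U t * (X *ᵥ v) t = ∑ i, (Xᵀ *ᵥ U) i * v i := by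
    simpa only [dotProduct, mulVec_transpose] using dotProduct_mulVec U X v
  have hexpand : ∑ t, (y t - (X *ᵥ βhat) t) ^ 2 =
      ∑ t, (y t - (X *ᵥ β) t) ^ 2 + 2 * ∑ t, U t * (X *ᵥ v) t + ∑ t, (X *ᵥ v) t ^ 2 := by
    simp only [mul_sum, ← sum_add_distrib]
    refine sum_congr rfl fun t _ => ?_
    simp only [U, v, mulVec_sub, Pi.sub_apply]
    ring
  have hfit : 0 ≤ c * ∑ t, (X *ᵥ v) t ^ 2 := by positivity
  rw [hexpand, hcross] at hmin
  linarith

end PenalizedLeastSquares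

section GroupNorm

variable {M L : ℕ}

def restrictGroup (l : Fin L) (v : Fin M × Fin L → ℝ) :
    EuclideanSpace ℝ {q : Fin M × Fin L // l ≤ q.2} :=
  WithLp.toLp 2 fun q => v q

theorem tailNormP_eq_norm (v : Fin M × Fin L → ℝ) (l : Fin L) :
    tailNormP M L v l = ‖restrictGroup l v‖ := by
  simp only [EuclideanSpace.norm_eq, tailNormP, Real.norm_eq_abs, sq_abs]
  exact congrArg Real.sqrt (sum_subtype _ (by simp) _)

theorem tailNormP_add_le (u w : Fin M × Fin L → ℝ) (l : Fin L) :
    tailNormP M L (u + w) l ≤ tailNormP M L u l + tailNormP M L w l := by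
  simp only [tailNormP_eq_norm]
  exact norm_add_le (restrictGroup l u) (restrictGroup l w)

theorem tailNormP_smul (c : ℝ) (u : Fin M × Fin L → ℝ) (l : Fin L) :
    tailNormP M L (c • u) l = |c| * tailNormP M L u l := by
  simp only [tailNormP_eq_norm]
  exact norm_smul c (restrictGroup l u)

theorem tailNormP_congr {u w : Fin M × Fin L → ℝ} {l : Fin L}
    (h : ∀ q : Fin M × Fin L, l ≤ q.2 → u q = w q) : tailNormP M L u l = tailNormP M L w l := by
  rw [tailNormP_eq_norm, tailNormP_eq_norm]
  exact congrArg (‖WithLp.toLp 2 ·‖) (funext fun q => h q.1 q.2)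

theorem abs_apply_le_tailNormP (u : Fin M × Fin L → ℝ) (q : Fin M × Fin L) :
    |u q| ≤ tailNormP M L u q.2 :=
  Real.abs_le_sqrt (single_le_sum (f := fun q => u q ^ 2) (fun _ _ => sq_nonneg _) (by simp))

theorem NG_nonneg (u : Fin M × Fin L → ℝ) : 0 ≤ NG M L u :=
  sum_nonneg fun _ _ => mul_nonneg (Real.sqrt_nonneg _) (Real.sqrt_nonneg _)

theorem NG_smul (c : ℝ) (u : Fin M × Fin L → ℝ) : NG M L (c • u) = |c| * NG M L u := by
  simp only [NG, tailNormP_smul, mul_sum, mul_left_comm]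

theorem NG_neg (u : Fin M × Fin L → ℝ) : NG M L (-u) = NG M L u := by
  simpa using NG_smul (-1) u

theorem abs_apply_le_NG (u : Fin M × Fin L → ℝ) (q : Fin M × Fin L) : |u q| ≤ NG M L u := by
  have hweight : 1 ≤ Real.sqrt ((M * (L - q.2.val) : ℕ)) := by
    rw [Real.one_le_sqrt, Nat.one_le_cast]
    exact Nat.mul_pos (Fin.pos q.1) (Nat.sub_pos_of_lt q.2.isLt)
  calc |u q| ≤ tailNormP M L u q.2 := abs_apply_le_tailNormP u q
    _ ≤ Real.sqrt ((M * (L - q.2.val) : ℕ)) * tailNormP M L u q.2 :=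
      le_mul_of_one_le_left (Real.sqrt_nonneg _) hweight
    _ ≤ NG M L u :=
      single_le_sum (f := fun l => Real.sqrt ((M * (L - l.val) : ℕ)) * tailNormP M L u l)
        (fun _ _ => mul_nonneg (Real.sqrt_nonneg _) (Real.sqrt_nonneg _)) (mem_univ _)

noncomputable def NGOn (M L : ℕ) (s : Finset (Fin L)) (v : Fin M × Fin L → ℝ) : ℝ :=
  ∑ l ∈ s, Real.sqrt ((M * (L - l.val) : ℕ)) * tailNormP M L v l

theorem NGOn_add_le (s : Finset (Fin L)) (u w : Fin M × Fin L → ℝ) :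
    NGOn M L s (u + w) ≤ NGOn M L s u + NGOn M L s w := by
  simp only [NGOn, ← sum_add_distrib, ← mul_add]
  exact sum_le_sum fun l _ =>
    mul_le_mul_of_nonneg_left (tailNormP_add_le u w l) (Real.sqrt_nonneg _)

theorem NG_eq_NGOn_add_NGOn (L₀ : ℕ) (v : Fin M × Fin L → ℝ) :
    NG M L v = NGOn M L {l | l.val < L₀} v + NGOn M L {l | L₀ ≤ l.val} v := by
  simp only [NGOn, ← not_lt]
  exact (sum_filter_add_sum_filter_not _ _ _).symm

end GroupNorm

theorem NGOn_tail_le_three_mul_NGOn_head {M L : ℕ} (L₀ : ℕ) {β βhat : Fin M × Fin L → ℝ}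
    (hsupp : ∀ q : Fin M × Fin L, L₀ ≤ q.2.val → β q = 0)
    (hnorm : NG M L βhat ≤ NG M L β + NG M L (β - βhat) / 2) :
    NGOn M L {l | L₀ ≤ l.val} (β - βhat) ≤ 3 * NGOn M L {l | l.val < L₀} (β - βhat) := by
  have hβ_zero : ∀ l ∈ ({l | L₀ ≤ l.val} : Finset (Fin L)), ∀ q : Fin M × Fin L,
      l ≤ q.2 → β q = 0 :=
    fun l hl q hq => hsupp q ((mem_filter.mp hl).2.trans hq)
  have hβ_tail : NGOn M L {l | L₀ ≤ l.val} β = 0 := by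
    refine sum_eq_zero fun l hl => ?_
    rw [tailNormP_congr (w := 0) (hβ_zero l hl), tailNormP, mul_eq_zero]
    simp
  have hβhat_tail : NGOn M L {l | L₀ ≤ l.val} βhat = NGOn M L {l | L₀ ≤ l.val} (β - βhat) := by
    refine sum_congr rfl fun l hl => ?_
    rw [tailNormP_congr (u := β - βhat) (w := (-1 : ℝ) • βhat), tailNormP_smul]
    · simp
    · intro q hq
      simp [hβ_zero l hl q hq]
  have hβ_head := NGOn_add_le {l | l.val < L₀} βhat (β - βhat)
  rw [add_sub_cancel] at hβ_head
  rw [NG_eq_NGOn_add_NGOn L₀ β, NG_eq_NGOn_add_NGOn L₀ βhat, NG_eq_NGOn_add_NGOn L₀ (β - βhat),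
    hβ_tail, hβhat_tail] at hnorm
  linarith

theorem cone_condition_general {D M L : ℕ} (L₀ : ℕ)
    (lam : ℝ) (hlam0 : 0 < lam)
    (X : Matrix (Fin D) (Fin M × Fin L) ℝ) (y : Fin D → ℝ)
    (β : Fin M × Fin L → ℝ)
    (hsupp : ∀ q : Fin M × Fin L, L₀ ≤ q.2.val → β q = 0)
    (hlam : lam ≥ (4 / (D : ℝ)) * sSup {r : ℝ | ∃ w : Fin M × Fin L → ℝ, NG M L w ≤ 1 ∧
      r = ∑ q, (X.transpose.mulVec (y - X.mulVec β)) q * w q})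
    (βhat : Fin M × Fin L → ℝ)
    (hmin : ∀ a : Fin M × Fin L → ℝ,
      (1 / (D : ℝ)) * (∑ t, (y t - X.mulVec βhat t) ^ 2) + lam * NG M L βhat ≤
        (1 / (D : ℝ)) * (∑ t, (y t - X.mulVec a t) ^ 2) + lam * NG M L a) :
    (∑ l ∈ Finset.univ.filter (fun l : Fin L => L₀ ≤ l.val),
        Real.sqrt ((M * (L - l.val) : ℕ)) * tailNormP M L (β - βhat) l)
      ≤ 3 * ∑ l ∈ Finset.univ.filter (fun l : Fin L => l.val < L₀),
        Real.sqrt ((M * (L - l.val) : ℕ)) * tailNormP M L (β - βhat) l := by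
  have hbasic := penalized_least_squares_basic_inequality (c := 1 / (D : ℝ)) (by positivity)
    (fun a => lam * NG M L a) X y β βhat (hmin β)
  set Z := Xᵀ *ᵥ (y - X *ᵥ β)
  set dualNorm := sSup {r : ℝ | ∃ w, NG M L w ≤ 1 ∧ r = ∑ q, Z q * w q}
  have hdual : -∑ q, Z q * (β - βhat) q ≤ dualNorm * NG M L (β - βhat) := by
    simpa only [NG_neg, Pi.neg_apply, mul_neg, sum_neg_distrib] using
      sum_mul_le_sSup_mul (NG M L) NG_nonneg NG_smul abs_apply_le_NG Z (-(β - βhat))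
  have hnorm : NG M L βhat ≤ NG M L β + NG M L (β - βhat) / 2 := by
    have hv := NG_nonneg (β - βhat)
    have h1 := mul_le_mul_of_nonneg_left hdual (by positivity : (0 : ℝ) ≤ 2 * (1 / D))
    have h2 := mul_le_mul_of_nonneg_right hlam (by positivity : 0 ≤ NG M L (β - βhat) / 2)
    have h3 : 2 * (1 / (D : ℝ)) * (dualNorm * NG M L (β - βhat)) =
        4 / D * dualNorm * (NG M L (β - βhat) / 2) := by ring
    refine le_of_mul_le_mul_left ?_ hlam0
    linarith
  exact NGOn_tail_le_three_mul_NGOn_head L₀ hsupp hnorm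

/-- Cone condition for the group-LASSO estimator. -/
theorem cone_condition {D M L : ℕ} (hD : 0 < D) (L₀ : ℕ)
    (lam : ℝ) (hlam0 : 0 < lam)
    (X : Matrix (Fin D) (Fin M × Fin L) ℝ) (y : Fin D → ℝ)
    (β : Fin M × Fin L → ℝ)
    (hsupp : ∀ q : Fin M × Fin L, L₀ ≤ q.2.val → β q = 0)
    (hlam : lam ≥ (4 / (D : ℝ)) * sSup {r : ℝ | ∃ w : Fin M × Fin L → ℝ, NG M L w ≤ 1 ∧
      r = ∑ q, (X.transpose.mulVec (y - X.mulVec β)) q * w q})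
    (βhat : Fin M × Fin L → ℝ)
    (hmin : ∀ a : Fin M × Fin L → ℝ,
      (1 / (D : ℝ)) * (∑ t, (y t - X.mulVec βhat t) ^ 2) + lam * NG M L βhat ≤
        (1 / (D : ℝ)) * (∑ t, (y t - X.mulVec a t) ^ 2) + lam * NG M L a) :
    (∑ l ∈ Finset.univ.filter (fun l : Fin L => L₀ ≤ l.val),
        Real.sqrt ((M * (L - l.val) : ℕ)) * tailNormP M L (β - βhat) l)
      ≤ 3 * ∑ l ∈ Finset.univ.filter (fun l : Fin L => l.val < L₀),
        Real.sqrt ((M * (L - l.val) : ℕ)) * tailNormP M L (β - βhat) l :=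
  cone_condition_general L₀ lam hlam0 X y β hsupp hlam βhat hmin
end

section
/- Let β, β̂ ∈ ℝ^p, let S = supp(β), let λ > 0, and define S_λ = {j : |β̂_j| > λ}. Write v = β̂ − β and suppose Σ_{j ∉ S} |v_j| ≤ 3·Σ_{j ∈ S} |v_j|. If |S| ≤ L₀, then |S_λ \ S| ≤ (3 sqrt(L₀)/λ)·‖v‖₂. -/
/-! On a false discovery `j ∉ S` we have `β j = 0`, so `|v j| = |β̂ j| > λ`; hence `λ · |S_λ \ S|`
is at most the `ℓ¹` mass of `v` off `S`. The cone condition bounds that by `3 ∑_{j ∈ S} |v j|`,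
and Cauchy–Schwarz on the at most `L₀` indices of `S` by `3 √L₀ ‖v‖₂`. -/

open Finset

theorem sum_abs_le_sqrt_card_mul_sqrt_sum_sq {ι : Type*} (s : Finset ι) (f : ι → ℝ) :
    ∑ i ∈ s, |f i| ≤ √(#s : ℝ) * √(∑ i ∈ s, f i ^ 2) := by
  rw [← Real.sqrt_mul (Nat.cast_nonneg _)]
  apply Real.le_sqrt_of_sq_le
  simpa only [sq_abs] using sq_sum_le_card_mul_sum_sq (s := s) (f := fun i => |f i|)

theorem mul_card_sdiff_support_le_sum_abs_sub {ι : Type*} [Fintype ι] [DecidableEq ι]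
    (β βhat : ι → ℝ) (lam : ℝ) :
    lam * #(({j | lam < |βhat j|} : Finset ι) \ ({j | β j ≠ 0} : Finset ι)) ≤
      ∑ j ∈ {j | β j = 0}, |βhat j - β j| := by
  set T := ({j | lam < |βhat j|} : Finset ι) \ ({j | β j ≠ 0} : Finset ι)
  have hT : ∀ j ∈ T, lam < |βhat j| ∧ β j = 0 := fun j hj => by simpa [T] using hj
  calc lam * #T ≤ ∑ j ∈ T, |βhat j - β j| := by
        rw [mul_comm, ← nsmul_eq_mul]
        refine card_nsmul_le_sum _ _ _ fun j hj => ?_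
        rw [(hT j hj).2, sub_zero]
        exact (hT j hj).1.le
    _ ≤ ∑ j ∈ {j | β j = 0}, |βhat j - β j| :=
        sum_le_sum_of_subset_of_nonneg (fun j hj => by simpa using (hT j hj).2)
          fun _ _ _ => abs_nonneg _

/-- False-discovery bound: under the cone condition, the number of indices outside the
support of `β` where `|β̂_j| > λ` is at most `(3√L₀/λ)·‖β̂ − β‖₂`. -/
theorem false_discovery_bound {p : ℕ} (L₀ : ℕ) (β βhat : Fin p → ℝ)
    (lam : ℝ) (hlam : 0 < lam)
    (hcone : ∑ j ∈ Finset.univ.filter (fun j : Fin p => β j = 0), |βhat j - β j| ≤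
      3 * ∑ j ∈ Finset.univ.filter (fun j : Fin p => β j ≠ 0), |βhat j - β j|)
    (hS : (Finset.univ.filter (fun j : Fin p => β j ≠ 0)).card ≤ L₀) :
    ((Finset.univ.filter (fun j : Fin p => lam < |βhat j|) \
        Finset.univ.filter (fun j : Fin p => β j ≠ 0)).card : ℝ)
      ≤ (3 * Real.sqrt L₀ / lam) * Real.sqrt (∑ j, (βhat j - β j) ^ 2) := by
  set S : Finset (Fin p) := {j | β j ≠ 0}
  have hcs := sum_abs_le_sqrt_card_mul_sqrt_sum_sq S (fun j => βhat j - β j)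
  have hcard : √(#S : ℝ) ≤ √(L₀ : ℝ) := Real.sqrt_le_sqrt (by exact_mod_cast hS)
  have hsum : √(∑ j ∈ S, (βhat j - β j) ^ 2) ≤ √(∑ j, (βhat j - β j) ^ 2) :=
    Real.sqrt_le_sqrt <| sum_le_sum_of_subset_of_nonneg (subset_univ S) fun _ _ _ => sq_nonneg _
  rw [div_mul_eq_mul_div, le_div_iff₀ hlam, mul_comm _ lam, mul_assoc]
  calc lam * _ ≤ ∑ j ∈ {j | β j = 0}, |βhat j - β j| :=
        mul_card_sdiff_support_le_sum_abs_sub β βhat lam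
    _ ≤ 3 * ∑ j ∈ S, |βhat j - β j| := hcone
    _ ≤ 3 * (√(L₀ : ℝ) * √(∑ j, (βhat j - β j) ^ 2)) := by
        gcongr
        exact hcs.trans (mul_le_mul hcard hsum (Real.sqrt_nonneg _) (Real.sqrt_nonneg _))
end
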